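/- arXiv:1510.06343 — 10 statements merged into one kernel-verified Lean document; each statement's English description precedes it below -/
import Mathlib

section
/- Let ρ : ℝ → ℝ be a nonnegative integrable function with ∫_ℝ ρ(t) dt = 1 and κ := ∫_ℝ |t| ρ(t) dt < ∞, and for ε > 0 define the smoothed plus function p̂(t, ε) := ∫_ℝ max(t − εs, 0) ρ(s) ds. Then for every ε > 0 and every t ∈ ℝ, |p̂(t, ε) − max(t, 0)| ≤ κ ε. -/
open MeasureTheory

/-- For a probability density `ρ` with finite first absolute moment `κ`,
the smoothed plus function `p̂(t, ε) = ∫ max(t - εs, 0) ρ(s) ds` satisfies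
`|p̂(t, ε) - max(t, 0)| ≤ κ ε` for every `ε > 0` and `t ∈ ℝ`. -/
theorem smoothed_plus_close_to_plus
    (ρ : ℝ → ℝ) (hρ_int : Integrable ρ)
    (hρ_nonneg : ∀ t, 0 ≤ ρ t)
    (hρ_one : ∫ t, ρ t = 1)
    (κ : ℝ) (hκ_int : Integrable (fun t => |t| * ρ t))
    (hκ : κ = ∫ t, |t| * ρ t)
    (ε t : ℝ) (hε : 0 < ε) :
    |(∫ s, max (t - ε * s) 0 * ρ s) - max t 0| ≤ κ * ε := by
  have key : ∀ s : ℝ, |max (t - ε * s) 0 - max t 0| ≤ ε * |s| := by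
    intro s
    calc |max (t - ε * s) 0 - max t 0| ≤ |t - ε * s - t| := abs_max_sub_max_le_abs _ _ _
      _ = ε * |s| := by
          rw [show t - ε * s - t = -(ε * s) by ring, abs_neg, abs_mul, abs_of_pos hε]
  have hmeas : AEStronglyMeasurable (fun s : ℝ => max (t - ε * s) 0 * ρ s) volume := by
    exact (((continuous_const.sub (continuous_const.mul continuous_id)).max
      continuous_const).aestronglyMeasurable).mul hρ_int.1
  have hbound : Integrable (fun s : ℝ => |max t 0| * ρ s + ε * (|s| * ρ s)) :=
    (hρ_int.const_mul _).add (hκ_int.const_mul _)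
  have hint : Integrable (fun s : ℝ => max (t - ε * s) 0 * ρ s) := by
    refine hbound.mono' hmeas (Filter.Eventually.of_forall fun s => ?_)
    have h1 : |max (t - ε * s) 0| ≤ |max t 0| + ε * |s| := by
      calc |max (t - ε * s) 0| = |max t 0 + (max (t - ε * s) 0 - max t 0)| := by ring_nf
        _ ≤ |max t 0| + |max (t - ε * s) 0 - max t 0| := abs_add_le _ _
        _ ≤ |max t 0| + ε * |s| := by linarith [key s]
    have := mul_le_mul_of_nonneg_right h1 (hρ_nonneg s)
    calc ‖max (t - ε * s) 0 * ρ s‖ = |max (t - ε * s) 0| * ρ s := by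
          rw [Real.norm_eq_abs, abs_mul, abs_of_nonneg (hρ_nonneg s)]
      _ ≤ (|max t 0| + ε * |s|) * ρ s := this
      _ = |max t 0| * ρ s + ε * (|s| * ρ s) := by ring
  have hint2 : Integrable (fun s : ℝ => max t 0 * ρ s) := hρ_int.const_mul _
  have hconst : (∫ s, max t 0 * ρ s) = max t 0 := by
    rw [integral_const_mul, hρ_one, mul_one]
  have : |(∫ s, max (t - ε * s) 0 * ρ s) - max t 0| =
      |∫ s, (max (t - ε * s) 0 - max t 0) * ρ s| := by
    rw [show (fun s : ℝ => (max (t - ε * s) 0 - max t 0) * ρ s)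
        = fun s => max (t - ε * s) 0 * ρ s - max t 0 * ρ s from funext fun s => by ring,
      integral_sub hint hint2, hconst]
  rw [this]
  have hle : |∫ s, (max (t - ε * s) 0 - max t 0) * ρ s| ≤ ∫ s, ε * (|s| * ρ s) := by
    rw [← Real.norm_eq_abs]
    refine norm_integral_le_of_norm_le (hκ_int.const_mul ε)
      (Filter.Eventually.of_forall fun s => ?_)
    calc ‖(max (t - ε * s) 0 - max t 0) * ρ s‖
        = |max (t - ε * s) 0 - max t 0| * ρ s := by
          rw [Real.norm_eq_abs, abs_mul, abs_of_nonneg (hρ_nonneg s)]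
      _ ≤ ε * |s| * ρ s := mul_le_mul_of_nonneg_right (key s) (hρ_nonneg s)
      _ = ε * (|s| * ρ s) := by ring
  calc |∫ s, (max (t - ε * s) 0 - max t 0) * ρ s| ≤ ∫ s, ε * (|s| * ρ s) := hle
    _ = ε * κ := by rw [integral_const_mul, hκ]
    _ = κ * ε := mul_comm _ _
end

section
/- Let ρ : ℝ → ℝ be a nonnegative integrable function with ∫_ℝ ρ(t) dt = 1 and κ := ∫_ℝ |t| ρ(t) dt < ∞, and for ε > 0 let p̂(t, ε) := ∫_ℝ max(t − εs, 0) ρ(s) ds. Let m ≥ 1, let g₁, …, g_m : ℝ → ℝ be continuous functions, set f(x) := max{g₁(x), …, g_m(x)}, and define the nested smoothing S by S_m(x, ε) := g_m(x), S_j(x, ε) := g_j(x) + p̂(S_{j+1}(x, ε) − g_j(x), ε) for j = m−1, …, 1, and S(x, ε) := S₁(x, ε). Then for every ε > 0 and every x ∈ ℝ, |S(x, ε) − f(x)| ≤ (m − 1) κ ε. -/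
open MeasureTheory

/-- For a probability density `ρ` with finite first absolute moment `κ`,
and continuous functions `g 0, …, g (m-1)`, the nested smoothing `S` of
`f(x) = max_i g i x` (built from the smoothed plus function
`p̂(t, ε) = ∫ max(t - εs, 0) ρ(s) ds`) satisfies `|S 0 x - f x| ≤ (m-1) κ ε`. -/
theorem nested_smoothing_close_to_max
    (ρ : ℝ → ℝ) (hρ_int : Integrable ρ)
    (hρ_nonneg : ∀ t, 0 ≤ ρ t)
    (hρ_one : ∫ t, ρ t = 1)
    (κ : ℝ) (hκ_int : Integrable (fun t => |t| * ρ t))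
    (hκ : κ = ∫ t, |t| * ρ t)
    (m : ℕ) (hm : 1 ≤ m)
    (g : ℕ → ℝ → ℝ) (hg_cont : ∀ i < m, Continuous (g i))
    (ε : ℝ) (hε : 0 < ε)
    (S : ℕ → ℝ → ℝ)
    (hS_last : ∀ x, S (m - 1) x = g (m - 1) x)
    (hS_rec : ∀ j < m - 1, ∀ x,
      S j x = g j x + ∫ s, max (S (j + 1) x - g j x - ε * s) 0 * ρ s)
    (x : ℝ) (hmne : (Finset.range m).Nonempty) :
    |S 0 x - (Finset.range m).sup' hmne (fun i => g i x)| ≤ (m - 1 : ℕ) * κ * ε := by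
  -- integrability of the smoothed plus integrand
  have hint : ∀ t : ℝ, Integrable (fun s => max (t - ε * s) 0 * ρ s) := by
    intro t
    have hb : Integrable (fun s => |t| * ρ s + ε * (|s| * ρ s)) :=
      (hρ_int.const_mul _).add (hκ_int.const_mul _)
    refine hb.mono' ((Continuous.aestronglyMeasurable (by continuity)).mul hρ_int.1) ?_
    filter_upwards with s
    have h1 : max (t - ε * s) 0 ≤ |t| + ε * |s| := by
      apply max_le
      · calc t - ε * s ≤ |t - ε * s| := le_abs_self _
          _ ≤ |t| + |ε * s| := by
              rw [sub_eq_add_neg]; exact (abs_add_le _ _).trans (by rw [abs_neg])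
          _ = |t| + ε * |s| := by rw [abs_mul, abs_of_pos hε]
      · positivity
    have hn : ‖max (t - ε * s) 0 * ρ s‖ = max (t - ε * s) 0 * ρ s := by
      rw [Real.norm_eq_abs, abs_of_nonneg (mul_nonneg (le_max_right _ _) (hρ_nonneg s))]
    rw [hn]
    calc max (t - ε * s) 0 * ρ s ≤ (|t| + ε * |s|) * ρ s :=
          mul_le_mul_of_nonneg_right h1 (hρ_nonneg s)
      _ = |t| * ρ s + ε * (|s| * ρ s) := by ring
  -- the smoothed plus function is within κ ε of the plus function
  have hclose : ∀ t : ℝ, |(∫ s, max (t - ε * s) 0 * ρ s) - max t 0| ≤ κ * ε := by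
    intro t
    have h0 : max t 0 = ∫ s, max t 0 * ρ s := by
      rw [integral_const_mul, hρ_one, mul_one]
    rw [h0, ← integral_sub (hint t) (hρ_int.const_mul _)]
    calc |∫ s, (max (t - ε * s) 0 * ρ s - max t 0 * ρ s)|
        ≤ ∫ s, |max (t - ε * s) 0 * ρ s - max t 0 * ρ s| := by
          simpa [Real.norm_eq_abs] using
            norm_integral_le_integral_norm (fun s => max (t - ε * s) 0 * ρ s - max t 0 * ρ s)
      _ ≤ ∫ s, ε * (|s| * ρ s) := by
          apply integral_mono ((hint t).sub (hρ_int.const_mul _)).abs (hκ_int.const_mul ε)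
          intro s
          have h2 : |max (t - ε * s) 0 - max t 0| ≤ ε * |s| := by
            calc |max (t - ε * s) 0 - max t 0| ≤ |(t - ε * s) - t| :=
                  abs_max_sub_max_le_abs _ _ _
              _ = ε * |s| := by
                  rw [show (t - ε * s) - t = -(ε * s) by ring, abs_neg, abs_mul,
                    abs_of_pos hε]
          calc |max (t - ε * s) 0 * ρ s - max t 0 * ρ s|
              = |max (t - ε * s) 0 - max t 0| * ρ s := by
                rw [← sub_mul, abs_mul, abs_of_nonneg (hρ_nonneg s)]
            _ ≤ ε * |s| * ρ s := mul_le_mul_of_nonneg_right h2 (hρ_nonneg s)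
            _ = ε * (|s| * ρ s) := by ring
      _ = κ * ε := by rw [integral_const_mul, ← hκ]; ring
  -- helper: sup' doesn't depend on the nonemptiness proof
  have hsup_eq : ∀ (s t : Finset ℕ) (hs : s.Nonempty) (ht : t.Nonempty), s = t →
      s.sup' hs (fun i => g i x) = t.sup' ht (fun i => g i x) := by
    rintro s t hs ht rfl; rfl
  -- the partial maxima
  have hFne : ∀ j : ℕ, (Finset.Ico (min j (m - 1)) m).Nonempty := by
    intro j; exact Finset.nonempty_Ico.mpr (by omega)
  set F : ℕ → ℝ := fun j => (Finset.Ico (min j (m - 1)) m).sup' (hFne j) (fun i => g i x)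
    with hF
  -- main downward induction
  have key : ∀ k, k ≤ m - 1 → |S (m - 1 - k) x - F (m - 1 - k)| ≤ (k : ℝ) * κ * ε := by
    intro k
    induction k with
    | zero =>
      intro _
      have hFeq : F (m - 1) = g (m - 1) x := by
        simp only [hF]
        apply le_antisymm
        · apply Finset.sup'_le
          intro i hi
          have : i = m - 1 := by simp [Finset.mem_Ico] at hi; omega
          rw [this]
        · have hmem : m - 1 ∈ Finset.Ico (min (m - 1) (m - 1)) m :=
            Finset.mem_Ico.mpr (by omega)
          exact Finset.le_sup' (fun i => g i x) hmem
      simp only [Nat.sub_zero]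
      rw [hS_last, hFeq]
      simp
    | succ k ih =>
      intro hk
      have ih' := ih (by omega)
      set j := m - 1 - (k + 1) with hj
      have hj1 : j + 1 = m - 1 - k := by omega
      have hjlt : j < m - 1 := by omega
      -- F j = max (g j x) (F (j+1))
      have hFj : F j = max (g j x) (F (j + 1)) := by
        simp only [hF]
        apply le_antisymm
        · apply Finset.sup'_le
          intro i hi
          simp only [Finset.mem_Ico] at hi
          rcases eq_or_lt_of_le (show min j (m - 1) ≤ i by omega) with h | h
          · have : i = j := by omega
            rw [this]; exact le_max_left _ _
          · have hmem : i ∈ Finset.Ico (min (j + 1) (m - 1)) m :=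
              Finset.mem_Ico.mpr (by omega)
            exact le_trans (Finset.le_sup' (fun i => g i x) hmem) (le_max_right _ _)
        · apply max_le
          · have hmem : j ∈ Finset.Ico (min j (m - 1)) m :=
              Finset.mem_Ico.mpr (by omega)
            exact Finset.le_sup' (fun i => g i x) hmem
          · apply Finset.sup'_le
            intro i hi
            simp only [Finset.mem_Ico] at hi
            have hmem : i ∈ Finset.Ico (min j (m - 1)) m :=
              Finset.mem_Ico.mpr (by omega)
            exact Finset.le_sup' (fun i => g i x) hmem
      rw [hS_rec j hjlt x, hFj]
      have hmax : max (g j x) (F (j + 1)) = g j x + max (F (j + 1) - g j x) 0 := by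
        rcases le_total (g j x) (F (j + 1)) with h | h
        · rw [max_eq_right h, max_eq_left (by linarith)]; ring
        · rw [max_eq_left h, max_eq_right (by linarith)]; ring
      rw [hmax]
      have heq : g j x + (∫ s, max (S (j + 1) x - g j x - ε * s) 0 * ρ s)
          - (g j x + max (F (j + 1) - g j x) 0)
          = ((∫ s, max (S (j + 1) x - g j x - ε * s) 0 * ρ s)
              - max (S (j + 1) x - g j x) 0)
            + (max (S (j + 1) x - g j x) 0 - max (F (j + 1) - g j x) 0) := by ring
      rw [heq]
      have h1 := hclose (S (j + 1) x - g j x)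
      have h2 : |max (S (j + 1) x - g j x) 0 - max (F (j + 1) - g j x) 0|
          ≤ (k : ℝ) * κ * ε := by
        calc |max (S (j + 1) x - g j x) 0 - max (F (j + 1) - g j x) 0|
            ≤ |(S (j + 1) x - g j x) - (F (j + 1) - g j x)| :=
              abs_max_sub_max_le_abs _ _ _
          _ = |S (j + 1) x - F (j + 1)| := by ring_nf
          _ ≤ (k : ℝ) * κ * ε := by rw [hj1]; exact ih'
      calc _ ≤ _ := abs_add_le _ _
        _ ≤ κ * ε + (k : ℝ) * κ * ε := add_le_add h1 h2
        _ = ((k + 1 : ℕ) : ℝ) * κ * ε := by push_cast; ring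
  have hkey := key (m - 1) le_rfl
  simp only [Nat.sub_self] at hkey
  have hF0 : F 0 = (Finset.range m).sup' hmne (fun i => g i x) := by
    rw [hF]
    apply hsup_eq
    ext i; simp only [Finset.mem_Ico, Finset.mem_range]; omega
  rwa [hF0] at hkey
end

section
/- Let ρ : ℝ → ℝ be a nonnegative integrable function with ∫_ℝ ρ(t) dt = 1 and κ := ∫_ℝ |t| ρ(t) dt < ∞, and for ε > 0 let p̂(t, ε) := ∫_ℝ max(t − εs, 0) ρ(s) ds. Then for every fixed ε > 0 the function t ↦ p̂(t, ε) is differentiable at every t ∈ ℝ, its derivative equals ∂_t p̂(t, ε) = ∫_{{s ∈ ℝ : εs ≤ t}} ρ(s) ds, and this derivative lies in the interval [0, 1]. -/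
/-!
For each `s` the integrand `τ ↦ max (τ - g s) 0 * ρ s` is `|ρ s|`-Lipschitz, and away from its
kink `τ = g s` it is differentiable with derivative `ρ s` or `0`. If the kinks at `t` form a
null set, differentiation under the integral sign (in its Lipschitz form) gives the derivative
`∫_{g ≤ t} ρ`. For `g s = ε s` with `ε ≠ 0` that set is the single point `t / ε`.
-/

open MeasureTheory

lemma lipschitzWith_max_sub_mul (c r : ℝ) :
    LipschitzWith (Real.nnabs r) fun τ => max (τ - c) 0 * r := by
  refine LipschitzWith.of_dist_le_mul fun a b => ?_
  calc dist (max (a - c) 0 * r) (max (b - c) 0 * r)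
      = |max (a - c) 0 - max (b - c) 0| * |r| := by rw [Real.dist_eq, ← sub_mul, abs_mul]
    _ ≤ |(a - c) - (b - c)| * |r| :=
        mul_le_mul_of_nonneg_right (abs_max_sub_max_le_abs _ _ _) (abs_nonneg r)
    _ = Real.nnabs r * dist a b := by
        rw [Real.coe_nnabs, Real.dist_eq, sub_sub_sub_cancel_right, mul_comm]

lemma hasDerivAt_max_sub_mul {c t : ℝ} (h : c ≠ t) (r : ℝ) :
    HasDerivAt (fun τ => max (τ - c) 0 * r) (if c ≤ t then r else 0) t := by
  rcases h.lt_or_gt with hct | htc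
  · rw [if_pos hct.le]
    have hlin : HasDerivAt (fun τ => (τ - c) * r) r t := by
      simpa using ((hasDerivAt_id t).sub_const c).mul_const r
    refine hlin.congr_of_eventuallyEq ?_
    filter_upwards [Ioi_mem_nhds hct] with τ hτ
    rw [max_eq_left (sub_nonneg.mpr (le_of_lt hτ))]
  · rw [if_neg (not_le.mpr htc)]
    refine (hasDerivAt_const t (0 : ℝ)).congr_of_eventuallyEq ?_
    filter_upwards [Iio_mem_nhds htc] with τ hτ
    rw [max_eq_right (sub_nonpos.mpr (le_of_lt hτ)), zero_mul]

section

variable {α : Type*} [MeasurableSpace α] {μ : Measure α} {g ρ : α → ℝ}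

lemma integrable_max_sub_mul (hg : Measurable g) (hρ : Integrable ρ μ)
    (hgρ : Integrable (fun s => g s * ρ s) μ) (τ : ℝ) :
    Integrable (fun s => max (τ - g s) 0 * ρ s) μ := by
  refine ((hρ.norm.const_mul |τ|).add hgρ.norm).mono'
    (((measurable_const.sub hg).max measurable_const).aestronglyMeasurable.mul
      hρ.aestronglyMeasurable) (ae_of_all _ fun s => ?_)
  have hmax : |max (τ - g s) 0| ≤ |τ| + |g s| :=
    (abs_of_nonneg (le_max_right _ _)).trans_le
      ((max_le (le_abs_self _) (abs_nonneg _)).trans (abs_sub _ _))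
  calc ‖max (τ - g s) 0 * ρ s‖ = |max (τ - g s) 0| * |ρ s| := by
        rw [Real.norm_eq_abs, abs_mul]
    _ ≤ (|τ| + |g s|) * |ρ s| := by gcongr
    _ = |τ| * ‖ρ s‖ + ‖g s * ρ s‖ := by simp only [Real.norm_eq_abs, abs_mul]; ring

theorem hasDerivAt_integral_max_sub_mul (hg : Measurable g) (hρ : Integrable ρ μ)
    (hgρ : Integrable (fun s => g s * ρ s) μ) {t : ℝ} (ht : μ {s | g s = t} = 0) :
    HasDerivAt (fun τ => ∫ s, max (τ - g s) 0 * ρ s ∂μ)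
      (∫ s in {s | g s ≤ t}, ρ s ∂μ) t := by
  have hmeas : MeasurableSet {s | g s ≤ t} := measurableSet_le hg measurable_const
  have hkink : ∀ᵐ s ∂μ, g s ≠ t :=
    (measure_eq_zero_iff_ae_notMem.mp ht).mono fun _ hs => hs
  rw [← integral_indicator hmeas]
  refine (hasDerivAt_integral_of_dominated_loc_of_lip Filter.univ_mem (bound := ρ)
    (.of_forall fun τ => (integrable_max_sub_mul hg hρ hgρ τ).aestronglyMeasurable)
    (integrable_max_sub_mul hg hρ hgρ t) (hρ.aestronglyMeasurable.indicator hmeas)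
    (ae_of_all _ fun s => (lipschitzWith_max_sub_mul (g s) (ρ s)).lipschitzOnWith) hρ ?_).2
  filter_upwards [hkink] with s hs
  rw [Set.indicator_apply]
  exact hasDerivAt_max_sub_mul hs (ρ s)

end

theorem smoothed_plus_differentiable_general
    (ρ : ℝ → ℝ) (hρ_int : Integrable ρ)
    (hρ_nonneg : ∀ t, 0 ≤ ρ t)
    (hρ_one : ∫ t, ρ t = 1)
    (hκ_int : Integrable (fun t => |t| * ρ t))
    (ε : ℝ) (hε : 0 < ε) (t : ℝ) :
    HasDerivAt (fun τ => ∫ s, max (τ - ε * s) 0 * ρ s)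
        (∫ s in {s : ℝ | ε * s ≤ t}, ρ s) t ∧
      (∫ s in {s : ℝ | ε * s ≤ t}, ρ s) ∈ Set.Icc (0 : ℝ) 1 := by
  have hmoment : Integrable (fun s => ε * s * ρ s) := by
    refine (hκ_int.const_mul ε).mono' (by fun_prop) (ae_of_all _ fun s => le_of_eq ?_)
    rw [Real.norm_eq_abs, abs_mul, abs_mul, abs_of_pos hε, abs_of_nonneg (hρ_nonneg s), mul_assoc]
  have hkink : volume {s : ℝ | ε * s = t} = 0 := by
    have hpoint : {s : ℝ | ε * s = t} = {t / ε} := by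
      ext s
      simp [eq_div_iff hε.ne', mul_comm]
    rw [hpoint, measure_singleton]
  refine ⟨hasDerivAt_integral_max_sub_mul (by fun_prop) hρ_int hmoment hkink,
    integral_nonneg fun s => hρ_nonneg s, ?_⟩
  exact hρ_one ▸ setIntegral_le_integral hρ_int (ae_of_all _ hρ_nonneg)

/-- For a probability density `ρ` with finite first absolute moment,
the smoothed plus function `p̂(·, ε)` (for fixed `ε > 0`) is differentiable at every
`t`, with derivative `∫_{s : εs ≤ t} ρ(s) ds`, and this derivative lies in `[0, 1]`. -/
theorem smoothed_plus_differentiable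
    (ρ : ℝ → ℝ) (hρ_int : Integrable ρ)
    (hρ_nonneg : ∀ t, 0 ≤ ρ t)
    (hρ_one : ∫ t, ρ t = 1)
    (κ : ℝ) (hκ_int : Integrable (fun t => |t| * ρ t))
    (hκ : κ = ∫ t, |t| * ρ t)
    (ε : ℝ) (hε : 0 < ε) (t : ℝ) :
    HasDerivAt (fun τ => ∫ s, max (τ - ε * s) 0 * ρ s)
        (∫ s in {s : ℝ | ε * s ≤ t}, ρ s) t ∧
      (∫ s in {s : ℝ | ε * s ≤ t}, ρ s) ∈ Set.Icc (0 : ℝ) 1 :=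
  smoothed_plus_differentiable_general ρ hρ_int hρ_nonneg hρ_one hκ_int ε hε t
end

section
/- Let ρ : ℝ → ℝ be a nonnegative integrable function with ∫_ℝ ρ(t) dt = 1 and κ := ∫_ℝ |t| ρ(t) dt < ∞, and for ε > 0 let p̂(t, ε) := ∫_ℝ max(t − εs, 0) ρ(s) ds. Let m ≥ 1 and let g₁, …, g_m : ℝ → ℝ be continuously differentiable, and define the nested smoothing S by S_m(x, ε) := g_m(x), S_j(x, ε) := g_j(x) + p̂(S_{j+1}(x, ε) − g_j(x), ε) for j = m−1, …, 1, and S(x, ε) := S₁(x, ε). Then for every fixed ε > 0 the function x ↦ S(x, ε) is differentiable, and for every x ∈ ℝ there exist Λ₁, …, Λ_m ∈ [0, 1] with Λ₁ + ⋯ + Λ_m = 1 such that the derivative S_x(x, ε) = Σ_{i=1}^m Λ_i g_i'(x). -/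
/-!
Differentiating under the integral sign (the integrand `max (a - ε s) 0 * ρ s` is `|ρ s|`-Lipschitz
in `a` and differentiable except on the null set `ε s = a`), `p̂(·, ε)` has derivative
`∫_{ε s ≤ a} ρ ∈ [0, 1]`. Hence `S_j' = g_j' + q (S_{j+1}' - g_j')` for some `q ∈ [0, 1]`, so
`S_j'(x)` lies on the segment between `g_j'(x)` and `S_{j+1}'(x)`, and backward induction on `j`
puts `S_0'(x)` in the convex hull of the `g_i'(x)`.
-/

open MeasureTheory Filter Set

/-- The smoothed plus function `p̂(a, ε)`. -/
noncomputable def smoothPlus (ρ : ℝ → ℝ) (ε a : ℝ) : ℝ :=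
  ∫ s, max (a - ε * s) 0 * ρ s

lemma Finset.sum_image_eq_sum_inv_card_fiber_smul {ι α R M : Type*} [DecidableEq α]
    [DivisionRing R] [CharZero R] [AddCommGroup M] [Module R M]
    (s : Finset ι) (v : ι → α) (f : α → M) :
    ∑ y ∈ s.image v, f y = ∑ i ∈ s, ((s.filter (v · = v i)).card : R)⁻¹ • f (v i) := by
  refine Finset.sum_image' _ fun i hi => ?_
  have hcard : ((s.filter (v · = v i)).card : R) ≠ 0 :=
    Nat.cast_ne_zero.2 (Finset.card_ne_zero_of_mem (Finset.mem_filter.2 ⟨hi, rfl⟩))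
  rw [Finset.sum_congr rfl fun j hj => by rw [(Finset.mem_filter.1 hj).2], Finset.sum_const,
    ← Nat.cast_smul_eq_nsmul R, smul_smul, mul_inv_cancel₀ hcard, one_smul]

lemma Finset.exists_weights_of_mem_convexHull_image {ι R E : Type*} [Field R] [LinearOrder R]
    [IsStrictOrderedRing R] [AddCommGroup E] [Module R E] [DecidableEq E]
    {s : Finset ι} {v : ι → E} {x : E} (hx : x ∈ convexHull R (s.image v : Set E)) :
    ∃ w : ι → R, (∀ i ∈ s, 0 ≤ w i) ∧ ∑ i ∈ s, w i = 1 ∧ ∑ i ∈ s, w i • v i = x := by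
  obtain ⟨w, hw₀, hw₁, rfl⟩ := Finset.mem_convexHull'.1 hx
  -- the weight of a value is shared equally among the indices at which `v` takes it
  refine ⟨fun i => ((s.filter (v · = v i)).card : R)⁻¹ * w (v i), fun i hi => ?_, ?_, ?_⟩
  · exact mul_nonneg (by positivity) (hw₀ _ (Finset.mem_image_of_mem v hi))
  · simpa [smul_eq_mul] using
      (Finset.sum_image_eq_sum_inv_card_fiber_smul (R := R) s v w).symm.trans hw₁
  · simpa [mul_smul] using
      (Finset.sum_image_eq_sum_inv_card_fiber_smul (R := R) s v (fun y => w y • y)).symm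

lemma integrable_max_sub_mul_mul {ρ : ℝ → ℝ} (hρ : Integrable ρ)
    (hρ_moment : Integrable fun t => |t| * ρ t) (ε a : ℝ) :
    Integrable fun s => max (a - ε * s) 0 * ρ s := by
  refine ((hρ.norm.const_mul |a|).add (hρ_moment.norm.const_mul |ε|)).mono' ?_
    (ae_of_all _ fun s => ?_)
  · exact (by fun_prop : Continuous fun s => max (a - ε * s) 0).aestronglyMeasurable.mul
      hρ.aestronglyMeasurable
  · have hmax : |max (a - ε * s) 0| ≤ |a| + |ε| * |s| := by
      rw [abs_of_nonneg (le_max_right _ _), max_le_iff]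
      refine ⟨?_, by positivity⟩
      calc a - ε * s ≤ |a - ε * s| := le_abs_self _
        _ ≤ |a| + |ε * s| := abs_sub _ _
        _ = |a| + |ε| * |s| := by rw [abs_mul]
    simp only [Real.norm_eq_abs, abs_mul, abs_abs, Pi.add_apply]
    nlinarith [abs_nonneg (ρ s)]

lemma hasDerivAt_max_sub_const_zero {c a : ℝ} (h : c ≠ a) :
    HasDerivAt (fun x => max (x - c) 0) (if c ≤ a then 1 else 0) a := by
  rcases h.lt_or_gt with hca | hac
  · rw [if_pos hca.le]
    refine (hasDerivAt_id a |>.sub_const c).congr_of_eventuallyEq ?_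
    filter_upwards [lt_mem_nhds hca] with x hx
    exact max_eq_left (sub_nonneg.2 hx.le)
  · rw [if_neg (not_le.2 hac)]
    refine (hasDerivAt_const a 0).congr_of_eventuallyEq ?_
    filter_upwards [gt_mem_nhds hac] with x hx
    exact max_eq_right (sub_nonpos.2 hx.le)

lemma hasDerivAt_smoothPlus {ρ : ℝ → ℝ} {ε : ℝ} (hρ : Integrable ρ)
    (hρ_moment : Integrable fun t => |t| * ρ t) (hε : ε ≠ 0) (a : ℝ) :
    HasDerivAt (smoothPlus ρ ε) (∫ s, {s | ε * s ≤ a}.indicator ρ s) a := by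
  have hA : MeasurableSet {s : ℝ | ε * s ≤ a} := measurableSet_le (by fun_prop) (by fun_prop)
  refine (hasDerivAt_integral_of_dominated_loc_of_lip (bound := ρ) univ_mem
    (Eventually.of_forall fun x =>
      (integrable_max_sub_mul_mul hρ hρ_moment ε x).aestronglyMeasurable)
    (integrable_max_sub_mul_mul hρ hρ_moment ε a) (hρ.indicator hA).aestronglyMeasurable
    (ae_of_all _ fun s => ?_) hρ ?_).2
  · refine (LipschitzWith.of_dist_le_mul fun x y => ?_).lipschitzOnWith
    rw [Real.dist_eq, Real.dist_eq, ← sub_mul, abs_mul, Real.coe_nnabs, mul_comm]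
    have hmax := abs_max_sub_max_le_abs (x - ε * s) (y - ε * s) 0
    rw [sub_sub_sub_cancel_right] at hmax
    exact mul_le_mul_of_nonneg_left hmax (abs_nonneg _)
  · filter_upwards [(countable_singleton (a / ε)).ae_notMem volume] with s hs
    have hεs : ε * s ≠ a := fun h => hs (by rw [mem_singleton_iff, ← h]; field_simp)
    refine ((hasDerivAt_max_sub_const_zero hεs).mul_const (ρ s)).congr_deriv ?_
    simp only [indicator_apply, mem_ofPred_eq, ite_mul, one_mul, zero_mul]

lemma integral_indicator_mem_Icc {ρ : ℝ → ℝ} (hρ : Integrable ρ) (hρ_nonneg : ∀ t, 0 ≤ ρ t)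
    (hρ_one : ∫ t, ρ t = 1) {A : Set ℝ} (hA : MeasurableSet A) :
    ∫ s, A.indicator ρ s ∈ Icc 0 1 :=
  ⟨integral_nonneg (indicator_nonneg fun t _ => hρ_nonneg t),
    hρ_one ▸ integral_mono (hρ.indicator hA) hρ (indicator_le_self' fun t _ => hρ_nonneg t)⟩

lemma exists_mem_segment_hasDerivAt_add_comp_sub {P u v : ℝ → ℝ} {q u' v' x : ℝ}
    (hP : HasDerivAt P q (v x - u x)) (hq : q ∈ Icc 0 1) (hu : HasDerivAt u u' x)
    (hv : HasDerivAt v v' x) :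
    ∃ d ∈ segment ℝ u' v', HasDerivAt (fun y => u y + P (v y - u y)) d x :=
  ⟨u' + q * (v' - u'), segment_eq_image' ℝ u' v' ▸ ⟨q, hq, rfl⟩,
    hu.add (hP.comp x (hv.sub hu))⟩

theorem exists_hasDerivAt_mem_convexHull_of_nested {P : ℝ → ℝ}
    (hP : ∀ a, ∃ q ∈ Icc (0 : ℝ) 1, HasDerivAt P q a) {m : ℕ} {g S : ℕ → ℝ → ℝ}
    (hg : ∀ i < m, Differentiable ℝ (g i)) (hS_last : ∀ x, S (m - 1) x = g (m - 1) x)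
    (hS_rec : ∀ j < m - 1, ∀ x, S j x = g j x + P (S (j + 1) x - g j x))
    {j : ℕ} (hj : j < m) (x : ℝ) :
    ∃ d ∈ convexHull ℝ ((Finset.Ico j m).image (fun i => deriv (g i) x) : Set ℝ),
      HasDerivAt (S j) d x := by
  have hj' := Nat.le_sub_one_of_lt hj
  revert hj
  induction hj' using Nat.decreasingInduction with
  | self =>
    intro hj
    refine ⟨deriv (g (m - 1)) x, subset_convexHull ℝ _ ?_, ?_⟩
    · exact Finset.mem_image_of_mem _ (Finset.mem_Ico.2 ⟨le_rfl, Nat.sub_one_lt_of_lt hj⟩)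
    · rw [funext hS_last]
      exact (hg _ (Nat.sub_one_lt_of_lt hj) x).hasDerivAt
  | of_succ j hjm ih =>
    intro hj
    obtain ⟨d', hd', hSd'⟩ := ih (by omega)
    obtain ⟨q, hq, hPq⟩ := hP (S (j + 1) x - g j x)
    obtain ⟨d, hd, hSd⟩ := exists_mem_segment_hasDerivAt_add_comp_sub hPq hq
      (hg j hj x).hasDerivAt hSd'
    rw [funext (hS_rec j hjm)]
    refine ⟨d, (convex_convexHull ℝ _).segment_subset ?_ ?_ hd, hSd⟩
    · exact subset_convexHull ℝ _ (Finset.mem_image_of_mem _ (Finset.mem_Ico.2 ⟨le_rfl, hj⟩))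
    · refine convexHull_mono ?_ hd'
      exact Finset.coe_subset.2 (Finset.image_subset_image (Finset.Ico_subset_Ico_left j.le_succ))

theorem nested_smoothing_differentiable_general
    (ρ : ℝ → ℝ) (hρ_int : Integrable ρ)
    (hρ_nonneg : ∀ t, 0 ≤ ρ t)
    (hρ_one : ∫ t, ρ t = 1)
    (hκ_int : Integrable (fun t => |t| * ρ t))
    (m : ℕ) (hm : 1 ≤ m)
    (g : ℕ → ℝ → ℝ) (hg_smooth : ∀ i < m, ContDiff ℝ 1 (g i))
    (ε : ℝ) (hε : 0 < ε)
    (S : ℕ → ℝ → ℝ)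
    (hS_last : ∀ x, S (m - 1) x = g (m - 1) x)
    (hS_rec : ∀ j < m - 1, ∀ x,
      S j x = g j x + ∫ s, max (S (j + 1) x - g j x - ε * s) 0 * ρ s) :
    Differentiable ℝ (S 0) ∧
      ∀ x : ℝ, ∃ Λ : ℕ → ℝ,
        (∀ i < m, Λ i ∈ Set.Icc (0 : ℝ) 1) ∧
        (∑ i ∈ Finset.range m, Λ i) = 1 ∧
        deriv (S 0) x = ∑ i ∈ Finset.range m, Λ i * deriv (g i) x := by
  have hP (a : ℝ) : ∃ q ∈ Icc (0 : ℝ) 1, HasDerivAt (smoothPlus ρ ε) q a :=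
    ⟨_, integral_indicator_mem_Icc hρ_int hρ_nonneg hρ_one (measurableSet_le (by fun_prop)
      (by fun_prop)), hasDerivAt_smoothPlus hρ_int hκ_int hε.ne' a⟩
  have hS' := exists_hasDerivAt_mem_convexHull_of_nested hP
    (fun i hi => (hg_smooth i hi).differentiable one_ne_zero) hS_last hS_rec hm
  refine ⟨fun x => (hS' x).choose_spec.2.differentiableAt, fun x => ?_⟩
  obtain ⟨d, hd, hSd⟩ := hS' x
  obtain ⟨Λ, hΛ₀, hΛ₁, hΛd⟩ := Finset.exists_weights_of_mem_convexHull_image hd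
  rw [← Finset.range_eq_Ico] at hΛ₀ hΛ₁ hΛd
  refine ⟨Λ, fun i hi => ⟨hΛ₀ i (Finset.mem_range.2 hi), ?_⟩, hΛ₁, ?_⟩
  · exact hΛ₁ ▸ Finset.single_le_sum hΛ₀ (Finset.mem_range.2 hi)
  · rw [hSd.deriv, ← hΛd]
    simp only [smul_eq_mul]

/-- For a probability density `ρ` with finite first absolute moment,
continuously differentiable functions `g 0, …, g (m-1)`, and fixed `ε > 0`, the nested
smoothing `S 0` (built from the smoothed plus function) is differentiable, and at every
`x` its derivative is a convex combination `∑ Λ i * (g i)'(x)` with `Λ i ∈ [0,1]`,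
`∑ Λ i = 1`. -/
theorem nested_smoothing_differentiable
    (ρ : ℝ → ℝ) (hρ_int : Integrable ρ)
    (hρ_nonneg : ∀ t, 0 ≤ ρ t)
    (hρ_one : ∫ t, ρ t = 1)
    (κ : ℝ) (hκ_int : Integrable (fun t => |t| * ρ t))
    (hκ : κ = ∫ t, |t| * ρ t)
    (m : ℕ) (hm : 1 ≤ m)
    (g : ℕ → ℝ → ℝ) (hg_smooth : ∀ i < m, ContDiff ℝ 1 (g i))
    (ε : ℝ) (hε : 0 < ε)
    (S : ℕ → ℝ → ℝ)
    (hS_last : ∀ x, S (m - 1) x = g (m - 1) x)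
    (hS_rec : ∀ j < m - 1, ∀ x,
      S j x = g j x + ∫ s, max (S (j + 1) x - g j x - ε * s) 0 * ρ s) :
    Differentiable ℝ (S 0) ∧
      ∀ x : ℝ, ∃ Λ : ℕ → ℝ,
        (∀ i < m, Λ i ∈ Set.Icc (0 : ℝ) 1) ∧
        (∑ i ∈ Finset.range m, Λ i) = 1 ∧
        deriv (S 0) x = ∑ i ∈ Finset.range m, Λ i * deriv (g i) x :=
  nested_smoothing_differentiable_general ρ hρ_int hρ_nonneg hρ_one hκ_int m hm g hg_smooth ε hε S
    hS_last hS_rec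
end

section
/- Let V be a real Hilbert space, K ⊆ V a nonempty subset, P : V → V a continuous linear operator that is coercive with constant c_P > 0 (i.e. ⟪P v, v⟫ ≥ c_P ‖v‖² for all v ∈ V), and F ∈ V. Let φ : V × V → ℝ satisfy φ(u, v) + φ(v, u) ≤ α₀ ‖u − v‖² for all u, v ∈ V, where 0 ≤ α₀ < c_P. Then there is at most one u ∈ K satisfying the hemivariational inequality ⟪P u − F, v − u⟫ + φ(u, v) ≥ 0 for all v ∈ K. -/
open scoped RealInnerProductSpace

/-- Abstract uniqueness theorem for the hemivariational inequality:
if `P` is coercive with constant `c_P` and `φ(u,v) + φ(v,u) ≤ α₀ ‖u - v‖²` with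
`0 ≤ α₀ < c_P`, then there is at most one solution `u ∈ K` of
`⟪P u - F, v - u⟫ + φ(u, v) ≥ 0` for all `v ∈ K`. -/
theorem hvi_uniqueness
    {V : Type*} [NormedAddCommGroup V] [InnerProductSpace ℝ V]
    (K : Set V) (hK : K.Nonempty)
    (P : V →L[ℝ] V) (c_P : ℝ) (hcP : 0 < c_P)
    (hcoercive : ∀ v : V, ⟪P v, v⟫ ≥ c_P * ‖v‖ ^ 2)
    (F : V)
    (φ : V → V → ℝ) (α₀ : ℝ) (hα₀_nonneg : 0 ≤ α₀) (hα₀_lt : α₀ < c_P)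
    (hφ : ∀ u v : V, φ u v + φ v u ≤ α₀ * ‖u - v‖ ^ 2)
    (u₁ u₂ : V) (hu₁ : u₁ ∈ K) (hu₂ : u₂ ∈ K)
    (hsol₁ : ∀ v ∈ K, ⟪P u₁ - F, v - u₁⟫ + φ u₁ v ≥ 0)
    (hsol₂ : ∀ v ∈ K, ⟪P u₂ - F, v - u₂⟫ + φ u₂ v ≥ 0) :
    u₁ = u₂ := by
  have h1 := hsol₁ u₂ hu₂
  have h2 := hsol₂ u₁ hu₁
  have hco := hcoercive (u₁ - u₂)
  have hφ12 := hφ u₁ u₂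
  have hinner : ⟪P u₁ - F, u₂ - u₁⟫ + ⟪P u₂ - F, u₁ - u₂⟫ = -⟪P (u₁ - u₂), u₁ - u₂⟫ := by
    simp only [map_sub, inner_sub_left, inner_sub_right]
    ring
  have key : c_P * ‖u₁ - u₂‖ ^ 2 ≤ α₀ * ‖u₁ - u₂‖ ^ 2 := by
    nlinarith [hφ u₁ u₂]
  have : ‖u₁ - u₂‖ ^ 2 ≤ 0 := by nlinarith
  have hz : ‖u₁ - u₂‖ = 0 := by nlinarith [norm_nonneg (u₁ - u₂), sq_nonneg ‖u₁ - u₂‖]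
  have := norm_eq_zero.mp hz
  exact sub_eq_zero.mp this
end

section
/- Let V be a real Hilbert space, K ⊆ V a nonempty subset, P : V → V a continuous linear operator that is coercive with constant c_P > 0 (i.e. ⟪P v, v⟫ ≥ c_P ‖v‖² for all v ∈ V). Let φ : V × V → ℝ satisfy φ(u, v) + φ(v, u) ≤ α₀ ‖u − v‖² for all u, v ∈ V, where 0 ≤ α₀ < c_P. Let F₁, F₂ ∈ V and suppose u₁, u₂ ∈ K satisfy ⟪P u_i − F_i, v − u_i⟫ + φ(u_i, v) ≥ 0 for all v ∈ K (i = 1, 2). Then ‖u₁ − u₂‖ ≤ (c_P − α₀)^{−1} ‖F₁ − F₂‖, i.e. the solution depends Lipschitz continuously on the right-hand side. -/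
open scoped RealInnerProductSpace

/-- Abstract Lipschitz stability for the hemivariational inequality:
under coercivity of `P` with constant `c_P` and `φ(u,v) + φ(v,u) ≤ α₀ ‖u - v‖²` with
`0 ≤ α₀ < c_P`, solutions depend Lipschitz continuously on the right-hand side:
`‖u₁ - u₂‖ ≤ (c_P - α₀)⁻¹ ‖F₁ - F₂‖`. -/
theorem hvi_lipschitz_dependence
    {V : Type*} [NormedAddCommGroup V] [InnerProductSpace ℝ V]
    (K : Set V) (hK : K.Nonempty)
    (P : V →L[ℝ] V) (c_P : ℝ) (hcP : 0 < c_P)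
    (hcoercive : ∀ v : V, ⟪P v, v⟫ ≥ c_P * ‖v‖ ^ 2)
    (φ : V → V → ℝ) (α₀ : ℝ) (hα₀_nonneg : 0 ≤ α₀) (hα₀_lt : α₀ < c_P)
    (hφ : ∀ u v : V, φ u v + φ v u ≤ α₀ * ‖u - v‖ ^ 2)
    (F₁ F₂ : V) (u₁ u₂ : V) (hu₁ : u₁ ∈ K) (hu₂ : u₂ ∈ K)
    (hsol₁ : ∀ v ∈ K, ⟪P u₁ - F₁, v - u₁⟫ + φ u₁ v ≥ 0)
    (hsol₂ : ∀ v ∈ K, ⟪P u₂ - F₂, v - u₂⟫ + φ u₂ v ≥ 0) :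
    ‖u₁ - u₂‖ ≤ (c_P - α₀)⁻¹ * ‖F₁ - F₂‖ := by
  set w := u₁ - u₂ with hw
  have h1 := hsol₁ u₂ hu₂
  have h2 := hsol₂ u₁ hu₁
  have hsum : ⟪P u₁ - F₁, u₂ - u₁⟫ + ⟪P u₂ - F₂, u₁ - u₂⟫ + (φ u₁ u₂ + φ u₂ u₁) ≥ 0 := by
    linarith
  have hφ' := hφ u₁ u₂
  have hkey : ⟪P w, w⟫ - ⟪F₁ - F₂, w⟫ ≤ α₀ * ‖w‖ ^ 2 := by
    have expand : ⟪P u₁ - F₁, u₂ - u₁⟫ + ⟪P u₂ - F₂, u₁ - u₂⟫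
        = -(⟪P w, w⟫ - ⟪F₁ - F₂, w⟫) := by
      simp only [hw, map_sub, inner_sub_left, inner_sub_right]
      ring
    rw [expand] at hsum
    linarith
  have hco := hcoercive w
  have hmain : (c_P - α₀) * ‖w‖ ^ 2 ≤ ‖F₁ - F₂‖ * ‖w‖ := by
    have hcs : ⟪F₁ - F₂, w⟫ ≤ ‖F₁ - F₂‖ * ‖w‖ := real_inner_le_norm _ _
    nlinarith
  have hc : 0 < c_P - α₀ := by linarith
  rcases eq_or_lt_of_le (norm_nonneg w) with h0 | h0
  · rw [← h0]
    positivity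
  · rw [inv_mul_eq_div, le_div_iff₀ hc]
    nlinarith
end

section
/- Let h : ℝ → ℝ be Lipschitz continuous with constant c_L ≥ 0, let c_J < 0, let α₀ > c_L, and let t_J ∈ ℝ. Then for all t₁, t₂ ∈ ℝ with t₁ < t_J ≤ t₂ and t₁ ≤ t_J − c_J/(c_L − α₀), one has (h(t₂) − h(t₁))(t₁ − t₂) + c_J (t₁ − t₂) ≤ α₀ (t₁ − t₂)². -/
/-- Localized two-sided estimate for a law with one negative jump:
if `h` is Lipschitz with constant `c_L ≥ 0`, `c_J < 0`, `α₀ > c_L`, then for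
`t₁ < t_J ≤ t₂` with `t₁ ≤ t_J - c_J/(c_L - α₀)`, one has
`(h t₂ - h t₁)(t₁ - t₂) + c_J (t₁ - t₂) ≤ α₀ (t₁ - t₂)²`. -/
theorem negative_jump_local_estimate
    (h : ℝ → ℝ) (c_L : ℝ) (hcL_nonneg : 0 ≤ c_L)
    (hLip : ∀ a b : ℝ, |h a - h b| ≤ c_L * |a - b|)
    (c_J : ℝ) (hcJ : c_J < 0)
    (α₀ : ℝ) (hα₀ : c_L < α₀)
    (t_J : ℝ) :
    ∀ t₁ t₂ : ℝ, t₁ < t_J → t_J ≤ t₂ → t₁ ≤ t_J - c_J / (c_L - α₀) →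
      (h t₂ - h t₁) * (t₁ - t₂) + c_J * (t₁ - t₂) ≤ α₀ * (t₁ - t₂) ^ 2 := by
  intro t₁ t₂ h1 h2 h3
  set d : ℝ := t₂ - t₁ with hd
  have hdpos : 0 < d := by simp [hd]; linarith
  have hsub : α₀ - c_L > 0 := by linarith
  -- from h3: d ≥ -c_J / (α₀ - c_L)
  have hdiv : c_J / (c_L - α₀) = -c_J / (α₀ - c_L) := by
    rw [div_eq_div_iff (by linarith) (by linarith)]; ring
  have hdge : -c_J / (α₀ - c_L) ≤ d := by
    rw [hdiv] at h3; linarith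
  have hkey : -c_J ≤ (α₀ - c_L) * d := by
    rw [div_le_iff₀ hsub] at hdge; linarith
  have hLip' : |h t₂ - h t₁| ≤ c_L * d := by
    have := hLip t₂ t₁
    rwa [abs_of_pos hdpos] at this
  have h4 : -(h t₂ - h t₁) ≤ c_L * d := by
    have := (abs_le.mp hLip').1; linarith
  have : (h t₂ - h t₁) * (t₁ - t₂) + c_J * (t₁ - t₂) = -(h t₂ - h t₁) * d - c_J * d := by ring
  rw [this]
  have : α₀ * (t₁ - t₂) ^ 2 = α₀ * d ^ 2 := by ring
  rw [this]
  have h5 : -(h t₂ - h t₁) * d ≤ c_L * d * d :=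
    mul_le_mul_of_nonneg_right h4 hdpos.le
  have h6 : -c_J * d ≤ (α₀ - c_L) * d * d := by
    have := mul_le_mul_of_nonneg_right hkey hdpos.le
    linarith
  nlinarith
end

section
/- Let V be a real Hilbert space, K ⊆ V a nonempty subset, P : V → V a continuous linear operator that is coercive with constant c_P > 0 (i.e. ⟪P v, v⟫ ≥ c_P ‖v‖² for all v ∈ V). Let G : V → V satisfy ⟪G(u) − G(v), v − u⟫ ≤ α₀ ‖u − v‖² for all u, v ∈ V, where 0 ≤ α₀ < c_P. Then: (1) for each F ∈ V there is at most one u ∈ K satisfying ⟪P u, v − u⟫ + ⟪G(u), v − u⟫ ≥ ⟪F, v − u⟫ for all v ∈ K; and (2) if u₁, u₂ ∈ K are solutions corresponding to right-hand sides F₁, F₂ ∈ V respectively, then ‖u₁ − u₂‖ ≤ (c_P − α₀)^{−1} ‖F₁ − F₂‖. -/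
open scoped RealInnerProductSpace

lemma reg_key
    {V : Type*} [NormedAddCommGroup V] [InnerProductSpace ℝ V]
    (P : V →L[ℝ] V) (c_P : ℝ)
    (hcoercive : ∀ v : V, ⟪P v, v⟫ ≥ c_P * ‖v‖ ^ 2)
    (G : V → V) (α₀ : ℝ) (hα₀_lt : α₀ < c_P)
    (hG : ∀ u v : V, ⟪G u - G v, v - u⟫ ≤ α₀ * ‖u - v‖ ^ 2)
    (F₁ F₂ u₁ u₂ : V)
    (h1 : ⟪P u₁, u₂ - u₁⟫ + ⟪G u₁, u₂ - u₁⟫ ≥ ⟪F₁, u₂ - u₁⟫)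
    (h2 : ⟪P u₂, u₁ - u₂⟫ + ⟪G u₂, u₁ - u₂⟫ ≥ ⟪F₂, u₁ - u₂⟫) :
    ‖u₁ - u₂‖ ≤ (c_P - α₀)⁻¹ * ‖F₁ - F₂‖ := by
  have hpos : 0 < c_P - α₀ := by linarith
  set w := u₁ - u₂ with hw
  have hco := hcoercive w
  have hgg := hG u₁ u₂
  -- add the two inequalities
  have hsum : ⟪P w, w⟫ ≤ ⟪G u₁ - G u₂, u₂ - u₁⟫ + ⟪F₁ - F₂, u₁ - u₂⟫ := by
    have e1 : ⟪P u₁, u₂ - u₁⟫ = -⟪P u₁, u₁ - u₂⟫ := by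
      rw [← inner_neg_right]; rw [neg_sub]
    have hPw : ⟪P w, w⟫ = ⟪P u₁, u₁ - u₂⟫ - ⟪P u₂, u₁ - u₂⟫ := by
      simp [hw, map_sub, inner_sub_left]
    have hGd : ⟪G u₁ - G u₂, u₂ - u₁⟫ = ⟪G u₁, u₂ - u₁⟫ - ⟪G u₂, u₂ - u₁⟫ := by
      rw [inner_sub_left]
    have e2 : ⟪G u₂, u₂ - u₁⟫ = -⟪G u₂, u₁ - u₂⟫ := by
      rw [← inner_neg_right]; rw [neg_sub]
    have e3 : ⟪F₁ - F₂, u₁ - u₂⟫ = ⟪F₁, u₁ - u₂⟫ - ⟪F₂, u₁ - u₂⟫ := by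
      rw [inner_sub_left]
    have e4 : ⟪F₁, u₂ - u₁⟫ = -⟪F₁, u₁ - u₂⟫ := by
      rw [← inner_neg_right]; rw [neg_sub]
    rw [hPw, hGd, e2, e3]
    rw [e1, e4] at h1
    linarith
  have hcs : ⟪F₁ - F₂, u₁ - u₂⟫ ≤ ‖F₁ - F₂‖ * ‖w‖ := by
    calc ⟪F₁ - F₂, u₁ - u₂⟫ ≤ ‖F₁ - F₂‖ * ‖u₁ - u₂‖ := real_inner_le_norm _ _
    _ = ‖F₁ - F₂‖ * ‖w‖ := by rw [hw]
  have key : (c_P - α₀) * ‖w‖ ^ 2 ≤ ‖F₁ - F₂‖ * ‖w‖ := by nlinarith [hco, hgg, hsum, hcs]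
  rcases eq_or_lt_of_le (norm_nonneg w) with h0 | h0
  · rw [← h0]
    positivity
  · rw [inv_mul_eq_div, le_div_iff₀ hpos]
    calc ‖w‖ * (c_P - α₀) = (c_P - α₀) * ‖w‖ ^ 2 / ‖w‖ := by
          field_simp
      _ ≤ ‖F₁ - F₂‖ * ‖w‖ / ‖w‖ := by gcongr
      _ = ‖F₁ - F₂‖ := by field_simp

/-- Uniqueness and Lipschitz stability for the regularized problem:
if `P` is coercive with constant `c_P` and `G` is semimonotone in the sense
`⟪G u - G v, v - u⟫ ≤ α₀ ‖u - v‖²` with `0 ≤ α₀ < c_P`, then (1) for each `F` the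
regularized variational inequality has at most one solution in `K`, and (2) solutions
depend Lipschitz continuously on the right-hand side. -/
theorem regularized_uniqueness_and_lipschitz
    {V : Type*} [NormedAddCommGroup V] [InnerProductSpace ℝ V]
    (K : Set V) (hK : K.Nonempty)
    (P : V →L[ℝ] V) (c_P : ℝ) (hcP : 0 < c_P)
    (hcoercive : ∀ v : V, ⟪P v, v⟫ ≥ c_P * ‖v‖ ^ 2)
    (G : V → V) (α₀ : ℝ) (hα₀_nonneg : 0 ≤ α₀) (hα₀_lt : α₀ < c_P)
    (hG : ∀ u v : V, ⟪G u - G v, v - u⟫ ≤ α₀ * ‖u - v‖ ^ 2) :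
    (∀ F : V, ∀ u₁ u₂ : V, u₁ ∈ K → u₂ ∈ K →
      (∀ v ∈ K, ⟪P u₁, v - u₁⟫ + ⟪G u₁, v - u₁⟫ ≥ ⟪F, v - u₁⟫) →
      (∀ v ∈ K, ⟪P u₂, v - u₂⟫ + ⟪G u₂, v - u₂⟫ ≥ ⟪F, v - u₂⟫) →
      u₁ = u₂) ∧
    (∀ F₁ F₂ : V, ∀ u₁ u₂ : V, u₁ ∈ K → u₂ ∈ K →
      (∀ v ∈ K, ⟪P u₁, v - u₁⟫ + ⟪G u₁, v - u₁⟫ ≥ ⟪F₁, v - u₁⟫) →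
      (∀ v ∈ K, ⟪P u₂, v - u₂⟫ + ⟪G u₂, v - u₂⟫ ≥ ⟪F₂, v - u₂⟫) →
      ‖u₁ - u₂‖ ≤ (c_P - α₀)⁻¹ * ‖F₁ - F₂‖) := by
  constructor
  · intro F u₁ u₂ hu₁ hu₂ H1 H2
    have := reg_key P c_P hcoercive G α₀ hα₀_lt hG F F u₁ u₂ (H1 u₂ hu₂) (H2 u₁ hu₁)
    simp only [sub_self, norm_zero, mul_zero] at this
    have h0 := le_antisymm this (norm_nonneg _)
    rwa [norm_eq_zero, sub_eq_zero] at h0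
  · intro F₁ F₂ u₁ u₂ hu₁ hu₂ H1 H2
    exact reg_key P c_P hcoercive G α₀ hα₀_lt hG F₁ F₂ u₁ u₂ (H1 u₂ hu₂) (H2 u₁ hu₁)
end

section
/- For i = 1, 2 let g_i(x) := (a_i/2) x² + c_i x + d_i with a_i, c_i, d_i ∈ ℝ. For ε > 0 define S_x(x, ε) := g₁'(x) if g₂(x) − g₁(x) ≤ −ε/2; S_x(x, ε) := λ₁ g₁'(x) + λ₂ g₂'(x) with λ₂ := (g₂(x) − g₁(x))/ε + 1/2 and λ₁ := 1 − λ₂, if |g₂(x) − g₁(x)| < ε/2; and S_x(x, ε) := g₂'(x) if g₂(x) − g₁(x) ≥ ε/2. Then for every ε > 0 and all x₁, x₂ ∈ ℝ, (S_x(x₁, ε) − S_x(x₂, ε)) (x₁ − x₂) ≥ −2 max{|a₁|, |a₂|} (x₁ − x₂)². In particular, the semimonotonicity constant α₀ = 2 max{|a₁|, |a₂|} is independent of the regularization parameter ε. -/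
/-!
Writing `h = g₂ - g₁`, the three-case formula says `S_x = g₁' + w(h) (g₂' - g₁')`, where
`w(t) = p̂'(t, ε)` is `t/ε + 1/2` clamped to `[0, 1]`, a nondecreasing function of `t`.
Since `h` is quadratic, `h(x₁) - h(x₂) = (x₁ - x₂)(h'(x₁) + h'(x₂))/2`, and splitting
`w₁h'(x₁) - w₂h'(x₂)` into its antisymmetric and symmetric parts gives
`(S_x(x₁) - S_x(x₂))(x₁ - x₂) = (w₁ - w₂)(h(x₁) - h(x₂)) + ((1 - m)a₁ + m a₂)(x₁ - x₂)²`
with `m = (w₁ + w₂)/2 ∈ [0, 1]`. The first term is nonnegative by monotonicity of `w`, and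
the coefficient of the second is at least `-max{|a₁|, |a₂|}`, whatever `ε` is.
-/

open Set

noncomputable section

/-- The derivative `∂ₜ p̂(t, ε)` of the Zang-smoothed plus function. -/
def zangWeight (ε t : ℝ) : ℝ :=
  projIcc (0 : ℝ) 1 zero_le_one (t / ε + 1 / 2)

namespace zangWeight

variable {ε t : ℝ}

theorem mem_Icc : zangWeight ε t ∈ Icc (0 : ℝ) 1 :=
  Subtype.prop _

theorem monotone (hε : 0 ≤ ε) : Monotone (zangWeight ε) := fun _ _ hst =>
  Subtype.mono_coe _ <| monotone_projIcc _ <|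
    add_le_add_left (div_le_div_of_nonneg_right hst hε) _

theorem sub_mul_sub_nonneg (hε : 0 ≤ ε) (s t : ℝ) :
    0 ≤ (zangWeight ε s - zangWeight ε t) * (s - t) := by
  rcases le_total s t with hst | hts
  · exact mul_nonneg_of_nonpos_of_nonpos (sub_nonpos.2 (monotone hε hst)) (sub_nonpos.2 hst)
  · exact mul_nonneg (sub_nonneg.2 (monotone hε hts)) (sub_nonneg.2 hts)

theorem eq_zero (hε : 0 < ε) (ht : t ≤ -(ε / 2)) : zangWeight ε t = 0 := by
  have : t / ε + 1 / 2 ≤ 0 := by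
    rw [← le_sub_iff_add_le, zero_sub, div_le_iff₀ hε]; linarith
  rw [zangWeight, projIcc_of_le_left _ this]

theorem eq_one (hε : 0 < ε) (ht : ε / 2 ≤ t) : zangWeight ε t = 1 := by
  have : 1 ≤ t / ε + 1 / 2 := by
    rw [← sub_le_iff_le_add, le_div_iff₀ hε]; linarith
  rw [zangWeight, projIcc_of_right_le _ this]

theorem eq_of_abs_lt (hε : 0 < ε) (ht : |t| < ε / 2) : zangWeight ε t = t / ε + 1 / 2 := by
  obtain ⟨hl, hr⟩ := abs_lt.1 ht
  have hl' : 0 ≤ t / ε + 1 / 2 := by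
    rw [← neg_le_iff_add_nonneg, le_div_iff₀ hε]; linarith
  have hr' : t / ε + 1 / 2 ≤ 1 := by
    rw [← le_sub_iff_add_le, div_le_iff₀ hε]; linarith
  rw [zangWeight, projIcc_of_mem _ ⟨hl', hr'⟩]

theorem eq_interpolate (hε : 0 < ε) {S u v : ℝ} (hl : t ≤ -(ε / 2) → S = u)
    (hm : |t| < ε / 2 → S = (1 - (t / ε + 1 / 2)) * u + (t / ε + 1 / 2) * v)
    (hr : ε / 2 ≤ t → S = v) :
    S = u + zangWeight ε t * (v - u) := by
  rcases le_or_gt t (-(ε / 2)) with htl | htl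
  · rw [hl htl, eq_zero hε htl]; ring
  rcases lt_or_ge t (ε / 2) with htr | htr
  · rw [hm (abs_lt.2 ⟨htl, htr⟩), eq_of_abs_lt hε (abs_lt.2 ⟨htl, htr⟩)]; ring
  · rw [hr htr, eq_one hε htr]; ring

end zangWeight

end

theorem neg_max_abs_le_convex_comb {a₁ a₂ m : ℝ} (hm : m ∈ Icc (0 : ℝ) 1) :
    -max |a₁| |a₂| ≤ (1 - m) * a₁ + m * a₂ := by
  obtain ⟨hm₀, hm₁⟩ := hm
  have h₁ : -max |a₁| |a₂| ≤ a₁ := (neg_le_neg (le_max_left _ _)).trans (neg_abs_le a₁)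
  have h₂ : -max |a₁| |a₂| ≤ a₂ := (neg_le_neg (le_max_right _ _)).trans (neg_abs_le a₂)
  nlinarith

/-- The second factor in `hmono` is `(g₂ - g₁)(x₁) - (g₂ - g₁)(x₂)` for the quadratics `gᵢ`
with these coefficients. -/
theorem interpolate_linear_semimonotone {a₁ a₂ c₁ c₂ w₁ w₂ x₁ x₂ : ℝ}
    (hw₁ : w₁ ∈ Icc (0 : ℝ) 1) (hw₂ : w₂ ∈ Icc (0 : ℝ) 1)
    (hmono : 0 ≤ (w₁ - w₂) *
      ((x₁ - x₂) * (((a₂ - a₁) * x₁ + (c₂ - c₁)) + ((a₂ - a₁) * x₂ + (c₂ - c₁))) / 2)) :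
    -max |a₁| |a₂| * (x₁ - x₂) ^ 2 ≤
      ((a₁ * x₁ + c₁ + w₁ * ((a₂ - a₁) * x₁ + (c₂ - c₁)))
        - (a₁ * x₂ + c₁ + w₂ * ((a₂ - a₁) * x₂ + (c₂ - c₁)))) * (x₁ - x₂) := by
  set m := (w₁ + w₂) / 2 with hm_def
  have hm : m ∈ Icc (0 : ℝ) 1 := by
    rw [hm_def]; exact ⟨by linarith [hw₁.1, hw₂.1], by linarith [hw₁.2, hw₂.2]⟩
  calc -max |a₁| |a₂| * (x₁ - x₂) ^ 2
      ≤ ((1 - m) * a₁ + m * a₂) * (x₁ - x₂) ^ 2 :=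
        mul_le_mul_of_nonneg_right (neg_max_abs_le_convex_comb hm) (sq_nonneg _)
    _ ≤ (w₁ - w₂) * ((x₁ - x₂) * (((a₂ - a₁) * x₁ + (c₂ - c₁))
          + ((a₂ - a₁) * x₂ + (c₂ - c₁))) / 2) + ((1 - m) * a₁ + m * a₂) * (x₁ - x₂) ^ 2 :=
        le_add_of_nonneg_left hmono
    _ = _ := by ring

/-- For two quadratics `gᵢ(x) = (aᵢ/2)x² + cᵢx + dᵢ`, the derivative
`S_x(·, ε)` of the Zang smoothing of `max{g₁, g₂}` (given by its explicit three-case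
formula, with `gᵢ'(x) = aᵢ x + cᵢ`) satisfies the semimonotonicity estimate
`(S_x(x₁,ε) - S_x(x₂,ε))(x₁ - x₂) ≥ -2 max{|a₁|,|a₂|} (x₁ - x₂)²`, with constant
independent of `ε`. -/
theorem zang_quadratic_semimonotone
    (a₁ a₂ c₁ c₂ d₁ d₂ ε : ℝ) (hε : 0 < ε)
    (g₁ g₂ Sx : ℝ → ℝ)
    (hg₁ : ∀ x, g₁ x = a₁ / 2 * x ^ 2 + c₁ * x + d₁)
    (hg₂ : ∀ x, g₂ x = a₂ / 2 * x ^ 2 + c₂ * x + d₂)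
    (hSx_left : ∀ x, g₂ x - g₁ x ≤ -(ε / 2) → Sx x = a₁ * x + c₁)
    (hSx_mid : ∀ x, |g₂ x - g₁ x| < ε / 2 →
      Sx x = (1 - ((g₂ x - g₁ x) / ε + 1 / 2)) * (a₁ * x + c₁)
        + ((g₂ x - g₁ x) / ε + 1 / 2) * (a₂ * x + c₂))
    (hSx_right : ∀ x, ε / 2 ≤ g₂ x - g₁ x → Sx x = a₂ * x + c₂) :
    ∀ x₁ x₂ : ℝ,
      (Sx x₁ - Sx x₂) * (x₁ - x₂) ≥ -(2 * max |a₁| |a₂|) * (x₁ - x₂) ^ 2 := by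
  intro x₁ x₂
  have hS : ∀ x, Sx x = a₁ * x + c₁
      + zangWeight ε (g₂ x - g₁ x) * ((a₂ - a₁) * x + (c₂ - c₁)) := fun x => by
    rw [zangWeight.eq_interpolate hε (hSx_left x) (hSx_mid x) (hSx_right x)]; ring
  have hgap : g₂ x₁ - g₁ x₁ - (g₂ x₂ - g₁ x₂)
      = (x₁ - x₂) * (((a₂ - a₁) * x₁ + (c₂ - c₁)) + ((a₂ - a₁) * x₂ + (c₂ - c₁))) / 2 := by
    simp only [hg₁, hg₂]; ring
  have hmono := zangWeight.sub_mul_sub_nonneg hε.le (g₂ x₁ - g₁ x₁) (g₂ x₂ - g₁ x₂)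
  rw [hgap] at hmono
  have hbound := interpolate_linear_semimonotone zangWeight.mem_Icc zangWeight.mem_Icc hmono
  have hM : 0 ≤ max |a₁| |a₂| * (x₁ - x₂) ^ 2 :=
    mul_nonneg ((abs_nonneg a₁).trans (le_max_left _ _)) (sq_nonneg _)
  rw [hS x₁, hS x₂]
  linarith
end

section
/- Let V be a real Hilbert space, K ⊆ V a nonempty subset, P : V → V a continuous linear operator that is coercive with constant c_P > 0 (i.e. ⟪P v, v⟫ ≥ c_P ‖v‖² for all v ∈ V), and F ∈ V. Let φ, φ_ε : V × V → ℝ. Suppose u ∈ K satisfies ⟪P u − F, v − u⟫ + φ(u, v) ≥ 0 for all v ∈ K, and u_ε ∈ K satisfies ⟪P u_ε − F, v − u_ε⟫ + φ_ε(u_ε, v) ≥ 0 for all v ∈ K. Then c_P ‖u_ε − u‖² ≤ φ(u, u_ε) + φ_ε(u_ε, u). -/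
open scoped RealInnerProductSpace

/-- Abstract regularization error bound: if `u ∈ K` solves the
hemivariational inequality with `φ` and `u_ε ∈ K` solves the regularized one with
`φ_ε` (same coercive operator `P` and right-hand side `F`), then
`c_P ‖u_ε - u‖² ≤ φ(u, u_ε) + φ_ε(u_ε, u)`. -/
theorem regularization_error_bound
    {V : Type*} [NormedAddCommGroup V] [InnerProductSpace ℝ V]
    (K : Set V) (hK : K.Nonempty)
    (P : V →L[ℝ] V) (c_P : ℝ) (hcP : 0 < c_P)
    (hcoercive : ∀ v : V, ⟪P v, v⟫ ≥ c_P * ‖v‖ ^ 2)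
    (F : V) (φ φε : V → V → ℝ)
    (u uε : V) (hu : u ∈ K) (huε : uε ∈ K)
    (hsol : ∀ v ∈ K, ⟪P u - F, v - u⟫ + φ u v ≥ 0)
    (hsolε : ∀ v ∈ K, ⟪P uε - F, v - uε⟫ + φε uε v ≥ 0) :
    c_P * ‖uε - u‖ ^ 2 ≤ φ u uε + φε uε u := by
  have h1 := hsol uε huε
  have h2 := hsolε u hu
  have hc := hcoercive (uε - u)
  have key : ⟪P (uε - u), uε - u⟫ =
      -(⟪P u - F, uε - u⟫ + ⟪P uε - F, u - uε⟫) := by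
    simp only [map_sub, inner_sub_left, inner_sub_right]
    ring
  nlinarith [hc, h1, h2, key]
end
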